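/- Let E be a finite directed graph, β > ln ρ(A), G ⊆ E^0 hereditary, and ε ∈ [0,∞)^{E^0} with ε|_G = 0. Set m = (1 - e^{-β}A)^{-1}ε. Then m_v = 0 for all v ∈ G, and m|_{E^0∖G} = (1 - e^{-β}A_{E^0∖G})^{-1}(ε|_{E^0∖G}). -/

import Mathlib

open scoped Classical

def IsPathFun {V E : Type} (r s : E → V) (n : ℕ) (f : Fin n → E) : Prop :=
  ∀ i : Fin n, ∀ h : i.1 + 1 < n, s (f i) = r (f ⟨i.1 + 1, h⟩)

def Reach {V E : Type} (r s : E → V) : V → V → Prop :=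
  Relation.ReflTransGen (fun a b => ∃ e, r e = a ∧ s e = b)

def Hered {V E : Type} (r s : E → V) (H : Set V) : Prop :=
  ∀ v ∈ H, ∀ w, Reach r s v w → w ∈ H

noncomputable def specRad {ι : Type} [Fintype ι] [DecidableEq ι] (A : Matrix ι ι ℝ) : ℝ :=
  sSup (insert 0 ((fun z : ℂ => ‖z‖) '' spectrum ℂ (A.map Complex.ofReal)))

/-!
A hereditary `G` is closed under edges, so `A`, and with it `B = 1 - e^{-β}A`, has no entries
from `G` to `Gᶜ`: `B` is block triangular for `G ⊔ Gᶜ`. Since `β > ln ρ(A)`, `e^β` is not in the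
spectrum of `A`, so `B` is invertible. Block triangularity passes to `B⁻¹`, so `B⁻¹ε` vanishes
on `G` with `ε`, and `det B` factors through the determinant of the `Gᶜ`-block, which is
therefore invertible; on vectors vanishing on `G`, `B` restricted to `Gᶜ` acts as that block.
-/

theorem Hered.isEmpty_edges {V E : Type} {r s : E → V} {G : Set V} (hG : Hered r s G)
    {v w : V} (hv : v ∈ G) (hw : w ∉ G) : IsEmpty {e : E // r e = v ∧ s e = w} :=
  ⟨fun ⟨e, hre, hse⟩ => hw (hG v hv w (Relation.ReflTransGen.single ⟨e, hre, hse⟩))⟩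

section SpectralRadius

variable {ι : Type} [Fintype ι] [DecidableEq ι] {A : Matrix ι ι ℝ}

theorem ofReal_mem_spectrum_map {t : ℝ} (ht : t ∈ spectrum ℝ A) :
    (t : ℂ) ∈ spectrum ℂ (A.map Complex.ofReal) := by
  rw [Matrix.mem_spectrum_iff_isRoot_charpoly] at ht ⊢
  exact Matrix.charpoly_map A Complex.ofRealHom ▸ ht.map

theorem bddAbove_specRad_set (A : Matrix ι ι ℝ) :
    BddAbove (insert 0 ((fun z : ℂ => ‖z‖) '' spectrum ℂ (A.map Complex.ofReal))) :=
  ((A.map Complex.ofReal).finite_spectrum.image _ |>.insert 0).bddAbove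

theorem specRad_nonneg : 0 ≤ specRad A :=
  le_csSup (bddAbove_specRad_set A) (Set.mem_insert 0 _)

theorem abs_le_specRad_of_mem_spectrum {t : ℝ} (ht : t ∈ spectrum ℝ A) : |t| ≤ specRad A :=
  le_csSup (bddAbove_specRad_set A) <|
    Set.mem_insert_of_mem 0 ⟨t, ofReal_mem_spectrum_map ht, Complex.norm_real t⟩

theorem isUnit_one_sub_inv_smul_of_specRad_lt {t : ℝ} (ht : specRad A < t) :
    IsUnit (1 - t⁻¹ • A) := by
  have ht₀ : t ≠ 0 := (specRad_nonneg.trans_lt ht).ne'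
  have hres : IsUnit (algebraMap ℝ (Matrix ι ι ℝ) t - A) :=
    spectrum.notMem_iff.1 fun hmem =>
      (abs_le_specRad_of_mem_spectrum hmem).not_gt (ht.trans_le (le_abs_self t))
  have hfactor : 1 - t⁻¹ • A = algebraMap ℝ (Matrix ι ι ℝ) t⁻¹ * (algebraMap ℝ _ t - A) := by
    rw [mul_sub, ← map_mul, inv_mul_cancel₀ ht₀, map_one, ← Algebra.smul_def]
  rw [hfactor]
  exact ((isUnit_iff_ne_zero.2 (inv_ne_zero ht₀)).map _).mul hres

end SpectralRadius

namespace Matrix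

variable {n R : Type*} {G : Set n}

theorem blockTriangular_mem_iff [Zero R] {M : Matrix n n R} :
    M.BlockTriangular (· ∈ G) ↔ ∀ v ∈ G, ∀ w ∉ G, M v w = 0 := by
  refine ⟨fun hM v hv w hw => hM ?_, fun hM v w hlt => ?_⟩
  · exact lt_of_le_not_ge (fun hw' => absurd hw' hw) fun h => hw (h hv)
  · obtain ⟨hv, hw⟩ := Classical.not_imp.1 hlt.not_ge
    exact hM v hv w hw

section Semiring

variable [Fintype n] [NonUnitalNonAssocSemiring R]

theorem BlockTriangular.mulVec_apply_eq_zero {N : Matrix n n R} (hN : N.BlockTriangular (· ∈ G))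
    {x : n → R} (hx : ∀ w ∈ G, x w = 0) {v : n} (hv : v ∈ G) : (N *ᵥ x) v = 0 := by
  refine Finset.sum_eq_zero fun w _ => show N v w * x w = 0 from ?_
  by_cases hw : w ∈ G
  · rw [hx w hw, mul_zero]
  · rw [blockTriangular_mem_iff.1 hN v hv w hw, zero_mul]

theorem mulVec_comp_val_of_eq_zero {M : Matrix n n R} {y : n → R}
    (hy : ∀ w ∈ G, y w = 0) (v : ↥Gᶜ) :
    (M *ᵥ y) v = (M.submatrix (Subtype.val : ↥Gᶜ → n) Subtype.val *ᵥ fun w : ↥Gᶜ => y w) v :=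
  calc (M *ᵥ y) v = ∑ w ∈ Gᶜ.toFinset, M v w * y w :=
        (Finset.sum_subset (Finset.subset_univ _) fun w _ hw => by
          rw [hy w (by simpa using hw), mul_zero]).symm
    _ = _ := (Finset.sum_set_coe Gᶜ).symm

end Semiring

variable [Fintype n] [DecidableEq n] [CommRing R]

theorem BlockTriangular.inv_mulVec_apply_eq_zero {M : Matrix n n R}
    (hM : M.BlockTriangular (· ∈ G)) (hdet : IsUnit M.det) {x : n → R}
    (hx : ∀ w ∈ G, x w = 0) {v : n} (hv : v ∈ G) : (M⁻¹ *ᵥ x) v = 0 :=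
  letI := M.invertibleOfIsUnitDet hdet
  (blockTriangular_inv_of_blockTriangular hM).mulVec_apply_eq_zero hx hv

theorem BlockTriangular.isUnit_det_submatrix_compl {M : Matrix n n R}
    (hM : M.BlockTriangular (· ∈ G)) (hdet : IsUnit M.det) :
    IsUnit (M.submatrix (Subtype.val : ↥Gᶜ → n) Subtype.val).det := by
  rw [twoBlockTriangular_det' M (· ∈ G) (blockTriangular_mem_iff.1 hM)] at hdet
  exact isUnit_of_mul_isUnit_right hdet

theorem BlockTriangular.inv_mulVec_comp_val {M : Matrix n n R}
    (hM : M.BlockTriangular (· ∈ G)) (hdet : IsUnit M.det) {x : n → R}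
    (hx : ∀ w ∈ G, x w = 0) :
    (fun v : ↥Gᶜ => (M⁻¹ *ᵥ x) v) =
      (M.submatrix (Subtype.val : ↥Gᶜ → n) Subtype.val)⁻¹ *ᵥ fun v : ↥Gᶜ => x v := by
  have hvanish := fun w => hM.inv_mulVec_apply_eq_zero hdet hx (v := w)
  have hMy : M *ᵥ (M⁻¹ *ᵥ x) = x := by rw [mulVec_mulVec, mul_nonsing_inv _ hdet, one_mulVec]
  conv_rhs => rw [← hMy]
  simp_rw [mulVec_comp_val_of_eq_zero hvanish, mulVec_mulVec,
    nonsing_inv_mul _ (hM.isUnit_det_submatrix_compl hdet), one_mulVec]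

end Matrix

theorem stmt17_general {V E : Type} [Fintype V] [DecidableEq V] (r s : E → V)
    (A : Matrix V V ℝ)
    (hA : ∀ v w, A v w = Nat.card {e : E // r e = v ∧ s e = w})
    (β : ℝ) (hβ : Real.log (specRad A) < β)
    (G : Set V) (hG : Hered r s G)
    (ε : V → ℝ) (hεG : ∀ v ∈ G, ε v = 0)
    (m : V → ℝ) (hm : m = ((1 - Real.exp (-β) • A)⁻¹).mulVec ε) :
    (∀ v ∈ G, m v = 0) ∧
    (fun v : ↥Gᶜ => m v.1) =
      ((1 - Real.exp (-β) • A.submatrix (Subtype.val : ↥Gᶜ → V) Subtype.val)⁻¹).mulVec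
        (fun v : ↥Gᶜ => ε v.1) := by
  subst hm
  have hB : (1 - Real.exp (-β) • A).BlockTriangular (· ∈ G) :=
    Matrix.blockTriangular_mem_iff.2 fun v hv w hw => by
      have := hG.isEmpty_edges hv hw
      simp [hA, Matrix.one_apply_ne (ne_of_mem_of_not_mem hv hw)]
  have hdet : IsUnit (1 - Real.exp (-β) • A).det := by
    rw [← Matrix.isUnit_iff_isUnit_det, Real.exp_neg]
    exact isUnit_one_sub_inv_smul_of_specRad_lt (Real.lt_exp_of_log_lt hβ)
  have hsub : (1 - Real.exp (-β) • A).submatrix (Subtype.val : ↥Gᶜ → V) Subtype.val =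
      1 - Real.exp (-β) • A.submatrix (Subtype.val : ↥Gᶜ → V) (Subtype.val : ↥Gᶜ → V) := by
    simp only [Matrix.submatrix_sub, Matrix.submatrix_smul, Pi.sub_apply, Pi.smul_apply,
      Matrix.submatrix_one _ Subtype.val_injective]
  refine ⟨fun v hv => hB.inv_mulVec_apply_eq_zero hdet hεG hv, ?_⟩
  rw [← hsub]
  exact hB.inv_mulVec_comp_val hdet hεG

/-- For hereditary G and ε vanishing on G, m = (1 - e^{-β}A)⁻¹ ε vanishes on G and its
restriction to E⁰∖G is (1 - e^{-β}A_{E⁰∖G})⁻¹ (ε|_{E⁰∖G}). -/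
theorem stmt17 {V E : Type} [Fintype V] [Fintype E] [DecidableEq V] (r s : E → V)
    (A : Matrix V V ℝ)
    (hA : ∀ v w, A v w = Nat.card {e : E // r e = v ∧ s e = w})
    (β : ℝ) (hβ : Real.log (specRad A) < β)
    (G : Set V) (hG : Hered r s G)
    (ε : V → ℝ) (hε : ∀ v, 0 ≤ ε v) (hεG : ∀ v ∈ G, ε v = 0)
    (m : V → ℝ) (hm : m = ((1 - Real.exp (-β) • A)⁻¹).mulVec ε) :
    (∀ v ∈ G, m v = 0) ∧
    (fun v : ↥Gᶜ => m v.1) =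
      ((1 - Real.exp (-β) • A.submatrix (Subtype.val : ↥Gᶜ → V) Subtype.val)⁻¹).mulVec
        (fun v : ↥Gᶜ => ε v.1) :=
  stmt17_general r s A hA β hβ G hG ε hεG m hm
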